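/- Let Y, Z, R be real-valued random variables on a probability space with Y, Z, R all square-integrable, and let Z' be a random variable that has the same distribution as Z and is independent of the triple (Y, Z, R). Then the expected change in quadratic loss when Z is replaced by the independent copy Z' satisfies E[(Y - (Z' + R))^2] - E[(Y - (Z + R))^2] = 2*(cov(Y, Z) - cov(R, Z)), where cov denotes covariance. -/

import Mathlib

open MeasureTheory ProbabilityTheory

/-- Covariance of two real-valued random variables w.r.t. a measure `μ`. -/
noncomputable def cov {Ω : Type*} [MeasurableSpace Ω] (μ : Measure Ω) (X Y : Ω → ℝ) : ℝ :=
  ∫ ω, (X ω - ∫ ω', X ω' ∂μ) * (Y ω - ∫ ω', Y ω' ∂μ) ∂μ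

/-!
Write the model error as `W - V` with `W = Y - R`. The second moment of `W - V` is
`Var W - 2 cov(W, V) + Var V + (E W - E V)²`. Passing from `V = Z` to `V = Z'` leaves the
variance and mean of `V` unchanged, and kills the cross covariance by independence, so the
loss grows by exactly `2 cov(W, Z) = 2 (cov(Y, Z) - cov(R, Z))`.
-/

section

variable {Ω : Type*} [MeasurableSpace Ω] {μ : Measure Ω}

lemma cov_eq_covariance (X Y : Ω → ℝ) : cov μ X Y = cov[X, Y; μ] := rfl

variable [IsProbabilityMeasure μ]

lemma integral_sub_sq_eq {W V : Ω → ℝ} (hW : MemLp W 2 μ) (hV : MemLp V 2 μ) :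
    ∫ ω, (W ω - V ω) ^ 2 ∂μ
      = Var[W; μ] - 2 * cov[W, V; μ] + Var[V; μ] + (μ[W] - μ[V]) ^ 2 := by
  have hsq := variance_eq_sub (hW.sub hV)
  simp only [Pi.sub_apply, Pi.pow_apply] at hsq
  rw [variance_sub hW hV, integral_sub (hW.integrable one_le_two) (hV.integrable one_le_two)]
    at hsq
  linarith

lemma integral_sub_sq_indepCopy_sub_integral_sub_sq {W Z Z' : Ω → ℝ}
    (hW : MemLp W 2 μ) (hZ : MemLp Z 2 μ) (hid : IdentDistrib Z' Z μ μ)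
    (hind : IndepFun W Z' μ) :
    ∫ ω, (W ω - Z' ω) ^ 2 ∂μ - ∫ ω, (W ω - Z ω) ^ 2 ∂μ = 2 * cov[W, Z; μ] := by
  have hZ' : MemLp Z' 2 μ := hid.symm.memLp_snd hZ
  rw [integral_sub_sq_eq hW hZ', integral_sub_sq_eq hW hZ, hind.covariance_eq_zero hW hZ',
    hid.variance_eq, hid.integral_eq]
  ring

end

theorem expected_loss_change_additive_general
    {Ω : Type*} [MeasurableSpace Ω] (μ : Measure Ω) [IsProbabilityMeasure μ]
    (Y Z R Z' : Ω → ℝ)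
    (hY : MemLp Y 2 μ) (hZ : MemLp Z 2 μ) (hR : MemLp R 2 μ)
    (hid : IdentDistrib Z' Z μ μ)
    (hindep : IndepFun Z' (fun ω => (Y ω, Z ω, R ω)) μ) :
    (∫ ω, (Y ω - (Z' ω + R ω)) ^ 2 ∂μ) - (∫ ω, (Y ω - (Z ω + R ω)) ^ 2 ∂μ)
      = 2 * (cov μ Y Z - cov μ R Z) := by
  have hind : IndepFun (fun ω => Y ω - R ω) Z' μ :=
    (hindep.comp measurable_id (by fun_prop : Measurable fun p : ℝ × ℝ × ℝ => p.1 - p.2.2)).symm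
  simp_rw [sub_add_eq_sub_sub_swap]
  rw [integral_sub_sq_indepCopy_sub_integral_sub_sq (W := fun ω => Y ω - R ω) (hY.sub hR) hZ
    hid hind, covariance_fun_sub_left hY hR hZ, cov_eq_covariance, cov_eq_covariance]

/-- Replacing one additive component `Z` of a model output `Z + R` by an independent,
identically distributed copy `Z'` changes the expected quadratic loss against the target `Y`
by `2 * (cov(Y, Z) - cov(R, Z))`. -/
theorem expected_loss_change_additive
    {Ω : Type*} [MeasurableSpace Ω] (μ : Measure Ω) [IsProbabilityMeasure μ]
    (Y Z R Z' : Ω → ℝ)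
    (hY : MemLp Y 2 μ) (hZ : MemLp Z 2 μ) (hR : MemLp R 2 μ) (hZ' : MemLp Z' 2 μ)
    (hid : IdentDistrib Z' Z μ μ)
    (hindep : IndepFun Z' (fun ω => (Y ω, Z ω, R ω)) μ) :
    (∫ ω, (Y ω - (Z' ω + R ω)) ^ 2 ∂μ) - (∫ ω, (Y ω - (Z ω + R ω)) ^ 2 ∂μ)
      = 2 * (cov μ Y Z - cov μ R Z) :=
  expected_loss_change_additive_general μ Y Z R Z' hY hZ hR hid hindep
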